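/- Let M be a loopless matroid on finite ground set E whose element weights are independent exponential random variables w(x) ~ Exp(λ_x) with rates λ_x > 0. Let the sampling-based greedy algorithm SAM observe one independent sample w̃(x) ~ Exp(λ_x) per element and output a minimum-weight basis B^SAM(w̃) of M with respect to the sampled weights (measurable tie-breaking; ties occur with probability zero). Let c*(M) be the maximum size of a cocircuit of M and OPT = min over bases B of Σ_{x∈B} 1/λ_x. Then E_{w̃}[ Σ_{x∈B^SAM(w̃)} 1/λ_x ] ≤ c*(M) · OPT. -/

import Mathlib

open scoped Classical

namespace Matroid

variable {α : Type*}

/-- A circuit of a matroid: an inclusion-wise minimal dependent set. -/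
def IsCircuit' (M : Matroid α) (C : Set α) : Prop :=
  M.Dep C ∧ ∀ D ⊂ C, ¬ M.Dep D

/-- A cocircuit of `M`: a circuit of the dual matroid `M✶`; equivalently, an
inclusion-wise minimal subset of the ground set meeting every base of `M`. -/
def IsCocircuit' (M : Matroid α) (C : Set α) : Prop :=
  M✶.IsCircuit' C

/-- `c*(M)`, the maximum size of a cocircuit of `M`. -/
noncomputable def maxCocircuitSize (M : Matroid α) : ℕ :=
  sSup {n | ∃ C, M.IsCocircuit' C ∧ C.ncard = n}

/-- `M` is loopless: every single element of the ground set is independent. -/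
def IsLoopless (M : Matroid α) : Prop := ∀ e ∈ M.E, M.Indep {e}

/-- `r(M)`, the rank of `M`: the common size of its bases. -/
noncomputable def rankNat (M : Matroid α) : ℕ :=
  sSup {n | ∃ B, M.IsBase B ∧ B.ncard = n}

/-- The contraction `M/e`, defined as the dual of the deletion of `e` from the dual,
`M/e = (M✶ ∖ e)✶`.  It is the matroid on `M.E ∖ {e}` whose independent sets, for a
non-loop `e`, are exactly the sets `F ⊆ M.E ∖ {e}` with `F ∪ {e}` independent in `M`. -/
noncomputable def contractElem (M : Matroid α) (e : α) : Matroid α :=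
  (M✶ ↾ (M.E \ {e}))✶

/-- A minimum-weight base of `M` with respect to the weights `w`. -/
def IsMinBase (M : Matroid α) (w : α → ℝ) (B : Set α) : Prop :=
  M.IsBase B ∧ ∀ B', M.IsBase B' → ∑ᶠ x ∈ B, w x ≤ ∑ᶠ x ∈ B', w x

end Matroid


open scoped ENNReal
open Set MeasureTheory ProbabilityTheory Real
open Set

namespace SamProof

variable {α : Type*} {M : Matroid α}

/-- Hyperplane construction: maximal set `Y ⊇ I` with `x ∉ cl Y` has cocircuit complement. -/
lemma exists_hyperplane [Fintype α] (hE : M.E = Set.univ) {I : Set α} {x : α}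
    (hx : x ∉ M.closure I) :
    ∃ Y : Set α, I ⊆ Y ∧ x ∉ M.closure Y ∧
      ∀ c ∉ M.closure Y, M.closure (insert c Y) = Set.univ := by
  classical
  have hfam : ({Y : Set α | I ⊆ Y ∧ x ∉ M.closure Y}).Finite := Set.toFinite _
  obtain ⟨Y, hY, hmax0⟩ := Set.Finite.exists_maximalFor id _ hfam ⟨I, Subset.rfl, hx⟩
  have hmax : ∀ Y' ∈ {Y : Set α | I ⊆ Y ∧ x ∉ M.closure Y}, id Y ⊆ id Y' → id Y = id Y' :=
    fun Y' h1 h2 => subset_antisymm h2 (hmax0 h1 h2)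
  obtain ⟨hIY, hxY⟩ := hY
  refine ⟨Y, hIY, hxY, fun c hc => ?_⟩
  have hground : ∀ s : Set α, s ⊆ M.E := fun s => by rw [hE]; exact subset_univ _
  have hcY : c ∉ Y := fun h => hc (M.subset_closure Y (hground Y) h)
  -- maximality: adding any element outside Y puts x in the closure
  have hmax' : ∀ z ∉ Y, x ∈ M.closure (insert z Y) := by
    intro z hz
    by_contra hxz
    have := hmax (insert z Y) ⟨hIY.trans (subset_insert _ _), hxz⟩ (subset_insert _ _)
    simp only [id] at this
    exact hz (by rw [this]; exact mem_insert _ _)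
  have hxc : x ∈ M.closure (insert c Y) := hmax' c hcY
  apply Set.eq_univ_of_forall
  intro z
  by_cases hzY : z ∈ M.closure Y
  · exact M.closure_subset_closure (subset_insert _ _) hzY
  · have hzY' : z ∉ Y := fun h => hzY (M.subset_closure Y (hground Y) h)
    have hxz : x ∈ M.closure (insert z Y) := hmax' z hzY'
    have hzx : z ∈ M.closure (insert x Y) := Matroid.mem_closure_insert hxY hxz
    have : M.closure (insert x Y) ⊆ M.closure (insert c Y) := by
      apply M.closure_subset_closure_of_subset_closure
      exact insert_subset hxc ((M.subset_closure Y (hground Y)).trans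
        (M.closure_subset_closure (subset_insert _ _)))
    exact this hzx

/-- The complement of the closure of the maximal set is a cocircuit. -/
lemma cocircuit_of_maximal [Fintype α] (hE : M.E = Set.univ) {Y : Set α} {x : α}
    (hxY : x ∉ M.closure Y)
    (hmax : ∀ c ∉ M.closure Y, M.closure (insert c Y) = Set.univ) :
    M.IsCocircuit' (Set.univ \ M.closure Y) := by
  have hground : ∀ s : Set α, s ⊆ M.E := fun s => by rw [hE]; exact subset_univ _
  constructor
  · rw [Matroid.dep_iff]
    constructor
    · rw [show M✶.Indep = M.Coindep from rfl, Matroid.coindep_iff_closure_compl_eq_ground (by rw [hE]; exact subset_univ _)]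
      intro h
      rw [hE] at h
      have : Set.univ \ (Set.univ \ M.closure Y) = M.closure Y := by
        simp [Set.diff_diff_cancel_left (M.closure_subset_ground Y |>.trans (by rw [hE]))]
      rw [this, M.closure_closure] at h
      exact hxY (h ▸ mem_univ x)
    · rw [Matroid.dual_ground, hE]; exact subset_univ _
  · intro D hD hdep
    rw [Matroid.dep_iff] at hdep
    apply hdep.1
    rw [show M✶.Indep = M.Coindep from rfl, Matroid.coindep_iff_closure_compl_eq_ground (by rw [hE]; exact subset_univ _)]
    obtain ⟨c, hcC, hcD⟩ := Set.exists_of_ssubset hD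
    have hcY : c ∉ M.closure Y := hcC.2
    rw [hE]
    apply subset_antisymm (M.closure_subset_ground _ |>.trans (by rw [hE]))
    have hsubset : insert c Y ⊆ univ \ D := by
      intro z hz
      rcases hz with rfl | hzY
      · exact ⟨mem_univ _, hcD⟩
      · refine ⟨mem_univ _, fun hzD => ?_⟩
        exact (hD.subset hzD).2 (M.subset_closure Y (hground Y) hzY)
    calc univ = M.closure (insert c Y) := (hmax c hcY).symm
      _ ⊆ M.closure (univ \ D) := M.closure_subset_closure hsubset

end SamProof

namespace SamProof

variable {α : Type*} {M : Matroid α}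

lemma closure_flat' (M : Matroid α) (X : Set α) : M.IsFlat (M.closure X) := by
  rw [Matroid.closure_def, sInter_eq_iInter]
  have hne : Nonempty {F // F ∈ {F | M.IsFlat F ∧ X ∩ M.E ⊆ F}} :=
    ⟨⟨M.E, M.ground_isFlat, inter_subset_right⟩⟩
  exact Matroid.IsFlat.iInter fun F => F.2.1

lemma cocircuit_ncard_le [Fintype α] {C : Set α} (hC : M.IsCocircuit' C) :
    C.ncard ≤ M.maxCocircuitSize := by
  apply le_csSup
  · exact ⟨(Set.univ : Set α).ncard, fun n ⟨C', _, hn⟩ =>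
      hn ▸ Set.ncard_le_ncard (subset_univ C') (Set.toFinite _)⟩
  · exact ⟨C, hC, rfl⟩

lemma indep_ncard_le_basis [Fintype α] {I K X : Set α} (hI : M.IsBasis I X)
    (hK : M.Indep K) (hKX : K ⊆ X) : K.ncard ≤ I.ncard := by
  by_contra hlt
  push_neg at hlt
  have henc : I.encard < K.encard := by
    rw [Set.Finite.encard_eq_coe_toFinset_card (Set.toFinite I),
      Set.Finite.encard_eq_coe_toFinset_card (Set.toFinite K)]
    exact_mod_cast by
      rwa [← Set.ncard_eq_toFinset_card, ← Set.ncard_eq_toFinset_card]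
  obtain ⟨e, he, hins⟩ := hI.indep.augment hK henc
  exact (hI.insert_dep ⟨hKX he.1, he.2⟩).not_indep hins

lemma core' [Fintype α] (hE : M.E = Set.univ) :
    ∀ n : ℕ, ∀ G I J : Set α, M.IsFlat G → M.IsBasis J G → I ⊆ J → (J \ I).ncard ≤ n →
      (G \ M.closure I).ncard ≤ M.maxCocircuitSize * n := by
  intro n
  induction n with
  | zero =>
    intro G I J hG hJ hIJ hcard
    have hJI : J = I := by
      have : (J \ I) = ∅ := by
        rw [← Set.ncard_eq_zero (Set.toFinite _)]; omega
      exact subset_antisymm (fun z hz => by_contra fun h => (this ▸ ⟨hz, h⟩ : z ∈ (∅ : Set α)))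
        hIJ
    have : M.closure I = G := by rw [← hJI, hJ.closure_eq_closure, hG.closure]
    simp [this]
  | succ n IH =>
    intro G I J hG hJ hIJ hcard
    by_cases hGI : G ⊆ M.closure I
    · have : G \ M.closure I = ∅ := diff_eq_empty.mpr hGI
      simp [this]
    · obtain ⟨x, hxG, hxI⟩ := not_subset.mp hGI
      obtain ⟨Y, hIY, hxY, hmax⟩ := exists_hyperplane hE hxI
      have cocirc := cocircuit_of_maximal hE hxY hmax
      set H := M.closure Y with hH
      have hground : ∀ s : Set α, s ⊆ M.E := fun s => by rw [hE]; exact subset_univ _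
      have hHflat : M.IsFlat H := closure_flat' M Y
      have hG' : M.IsFlat (G ∩ H) := by
        rw [Set.inter_eq_iInter]
        exact Matroid.IsFlat.iInter fun b => by cases b <;> simpa
      have hIG : I ⊆ G := hIJ.trans hJ.subset
      have hIH : I ⊆ H := hIY.trans (M.subset_closure Y (hground Y))
      have hIind : M.Indep I := hJ.indep.subset hIJ
      obtain ⟨J', hJ', hIJ'⟩ := hIind.subset_isBasis_of_subset (subset_inter hIG hIH)
        (hground _)
      obtain ⟨J'', hJ'', hJ'J''⟩ :=
        hJ'.indep.subset_isBasis_of_subset (hJ'.subset.trans inter_subset_left)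
        (hground _)
      have hne : J' ≠ J'' := by
        rintro rfl
        have hxclJ' : x ∈ M.closure J' := by
          rw [hJ''.closure_eq_closure, hG.closure]; exact hxG
        have : M.closure J' ⊆ G ∩ H := by
          have := M.closure_subset_closure hJ'.subset
          rwa [hG'.closure] at this
        exact hxY (this hxclJ').2
      have hJ'lt : J'.ncard < J''.ncard :=
        Set.ncard_lt_ncard (HasSubset.Subset.ssubset_of_ne hJ'J'' hne) (Set.toFinite _)
      have hJJ'' : J''.ncard = J.ncard := by
        have h := hJ''.encard_eq_encard hJ
        rw [Set.ncard_def, Set.ncard_def, h]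
      have hd1 : (J' \ I).ncard = J'.ncard - I.ncard := Set.ncard_diff hIJ' (Set.toFinite _)
      have hd2 : (J \ I).ncard = J.ncard - I.ncard := Set.ncard_diff hIJ (Set.toFinite _)
      have hIle : I.ncard ≤ J'.ncard := Set.ncard_le_ncard hIJ' (Set.toFinite _)
      have hIleJ : I.ncard ≤ J.ncard := Set.ncard_le_ncard hIJ (Set.toFinite _)
      have hstep : (J' \ I).ncard ≤ n := by omega
      have hIHrec := IH (G ∩ H) I J' hG' hJ' hIJ' hstep
      have hsub : G \ M.closure I ⊆ (Set.univ \ H) ∪ ((G ∩ H) \ M.closure I) := by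
        rintro z ⟨hzG, hzI⟩
        by_cases hzH : z ∈ H
        · exact Or.inr ⟨⟨hzG, hzH⟩, hzI⟩
        · exact Or.inl ⟨mem_univ _, hzH⟩
      calc (G \ M.closure I).ncard
          ≤ ((Set.univ \ H) ∪ ((G ∩ H) \ M.closure I)).ncard :=
            Set.ncard_le_ncard hsub (Set.toFinite _)
        _ ≤ (Set.univ \ H).ncard + ((G ∩ H) \ M.closure I).ncard := Set.ncard_union_le _ _
        _ ≤ M.maxCocircuitSize + M.maxCocircuitSize * n :=
            add_le_add (cocircuit_ncard_le cocirc) hIHrec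
        _ = M.maxCocircuitSize * (n + 1) := by ring

lemma core [Fintype α] (hE : M.E = Set.univ) {B : Set α} (hB : M.IsBase B) (X : Set α) :
    (Set.univ \ M.closure X).ncard ≤ M.maxCocircuitSize * (B \ X).ncard := by
  have hground : ∀ s : Set α, s ⊆ M.E := fun s => by rw [hE]; exact subset_univ _
  obtain ⟨I, hI⟩ := M.exists_isBasis X (hground X)
  obtain ⟨J, hJ, hIJ⟩ := hI.indep.subset_isBasis_of_subset (subset_univ I) (hground _)
  have hJE : M.IsBasis J M.E := by rwa [hE]
  have hJbase : M.IsBase J := Matroid.isBasis_ground_iff.mp hJE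
  have hJB : J.ncard = B.ncard := hJbase.ncard_eq_ncard_of_isBase hB
  have hBXI : (B ∩ X).ncard ≤ I.ncard :=
    indep_ncard_le_basis hI (hB.indep.subset inter_subset_left) inter_subset_right
  have hIJle : I.ncard ≤ J.ncard := Set.ncard_le_ncard hIJ (Set.toFinite _)
  have hd1 : (J \ I).ncard = J.ncard - I.ncard := Set.ncard_diff hIJ (Set.toFinite _)
  have hd2 : (B \ X).ncard = B.ncard - (B ∩ X).ncard := by
    rw [← Set.diff_self_inter]
    exact Set.ncard_diff inter_subset_left (Set.toFinite _)
  have hBXle : (B ∩ X).ncard ≤ B.ncard := Set.ncard_le_ncard inter_subset_left (Set.toFinite _)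
  have hn : (J \ I).ncard ≤ (B \ X).ncard := by omega
  have hGflat : M.IsFlat (Set.univ : Set α) := hE ▸ M.ground_isFlat
  have hJuniv : M.IsBasis J Set.univ := by rwa [← hE]
  have hcore := core' hE (J \ I).ncard Set.univ I J hGflat hJuniv hIJ le_rfl
  rw [hI.closure_eq_closure] at hcore
  calc (Set.univ \ M.closure X).ncard ≤ M.maxCocircuitSize * (J \ I).ncard := hcore
    _ ≤ M.maxCocircuitSize * (B \ X).ncard := Nat.mul_le_mul_left _ hn

end SamProof

namespace SamProof

variable {α : Type*} {M : Matroid α}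

lemma minbase_notin_closure [Fintype α] (hE : M.E = Set.univ) {w : α → ℝ} {B : Set α}
    (hB : M.IsMinBase w B) {a : α} (ha : a ∈ B) :
    a ∉ M.closure {y | y ≠ a ∧ w y < w a} := by
  intro hmem
  set X := {y | y ≠ a ∧ w y < w a} with hX
  have hground : ∀ s : Set α, s ⊆ M.E := fun s => by rw [hE]; exact subset_univ _
  have hBbase := hB.1
  have hBind := hBbase.indep
  have hBd : M.Indep (B \ {a}) := hBind.subset diff_subset
  have hnotin : a ∉ M.closure (B \ {a}) := hBind.notMem_closure_diff_of_mem ha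
  have hXsub : ¬ X ⊆ M.closure (B \ {a}) := fun hsub =>
    hnotin (M.closure_subset_closure_of_subset_closure hsub hmem)
  obtain ⟨y, hyX, hynotcl⟩ := not_subset.mp hXsub
  have hyBd : y ∉ B \ {a} := fun h => hynotcl (M.subset_closure _ (hground _) h)
  have hins : M.Indep (insert y (B \ {a})) := by
    rw [Matroid.insert_indep_iff]
    exact ⟨hBd, fun _ => ⟨by rw [hE]; exact mem_univ y, hynotcl⟩⟩
  obtain ⟨B'', hB'', hsubB''⟩ := hins.exists_isBase_superset
  have hpos : 0 < B.ncard := (Set.ncard_pos (Set.toFinite _)).mpr ⟨a, ha⟩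
  have hcard : (insert y (B \ {a})).ncard = B.ncard := by
    rw [Set.ncard_insert_of_notMem hyBd (Set.toFinite _),
      Set.ncard_diff_singleton_of_mem ha]
    omega
  have hKB'' : insert y (B \ {a}) = B'' :=
    Set.eq_of_subset_of_ncard_le hsubB''
      (by rw [hcard, hBbase.ncard_eq_ncard_of_isBase hB'']) (Set.toFinite _)
  have hsum1 : ∑ᶠ x ∈ insert y (B \ {a}), w x = w y + ∑ᶠ x ∈ B \ {a}, w x :=
    finsum_mem_insert w hyBd (Set.toFinite _)
  have hsum2 : ∑ᶠ x ∈ B, w x = w a + ∑ᶠ x ∈ B \ {a}, w x := by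
    conv_lhs => rw [show B = insert a (B \ {a}) by
      rw [Set.insert_diff_singleton, Set.insert_eq_self.mpr ha]]
    exact finsum_mem_insert w (fun h => h.2 rfl) (Set.toFinite _)
  have hmin := hB.2 B'' hB''
  rw [← hKB'', hsum1, hsum2] at hmin
  have : w y < w a := hyX.2
  linarith

/-- Pointwise counting bound: the number of elements outside the closure of `X` is at most
`c* ·` the number of elements of the base `B` outside `X`. -/
lemma counting [Fintype α] (hE : M.E = Set.univ) {B : Set α} (hB : M.IsBase B) (X : Set α) :
    (Set.univ \ M.closure X).ncard ≤ M.maxCocircuitSize * (B \ X).ncard := by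
  calc (Set.univ \ M.closure X).ncard
      ≤ M.maxCocircuitSize * (B \ X).ncard := core hE hB X

end SamProof


namespace SamProof

variable {α : Type*}

/-- Any event defined by a property of the (random) set `{y | P y ω}` is measurable,
provided each `{ω | P y ω}` is. -/
lemma measurableSet_setOf_set [Finite α] {Ω : Type*} [MeasurableSpace Ω]
    (P : α → Ω → Prop) (h : ∀ y, MeasurableSet {ω | P y ω}) (g : Set α → Prop) :
    MeasurableSet {ω | g {y | P y ω}} := by
  have hrw : {ω | g {y | P y ω}} =
      ⋃ (s : Set α) (_ : g s), ⋂ (y : α), {ω | P y ω ↔ y ∈ s} := by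
    ext ω
    simp only [mem_iUnion, mem_iInter, mem_setOf_eq]
    constructor
    · intro hg
      exact ⟨{y | P y ω}, hg, fun y => Iff.rfl⟩
    · rintro ⟨s, hs, hiff⟩
      have : {y | P y ω} = s := by ext y; exact hiff y
      rwa [this]
  rw [hrw]
  haveI : Finite (Set α) := inferInstance
  haveI : Countable (Set α) := Finite.to_countable
  haveI : Countable α := Finite.to_countable
  refine MeasurableSet.iUnion fun s => MeasurableSet.iUnion fun _ =>
    MeasurableSet.iInter fun y => ?_
  by_cases hy : y ∈ s
  · have : {ω | P y ω ↔ y ∈ s} = {ω | P y ω} := by ext ω; simp [hy]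
    rw [this]; exact h y
  · have : {ω | P y ω ↔ y ∈ s} = {ω | P y ω}ᶜ := by ext ω; simp [hy]
    rw [this]; exact (h y).compl

section Split

variable [Fintype α] (lam : α → ℝ)

/-- Splitting off one exponential coordinate of the product measure. -/
lemma pi_split (hlam : ∀ x, 0 < lam x) (a : α) :
    ∃ F : (ℝ × ({ i : α // ¬ i = a } → ℝ)) ≃ᵐ (α → ℝ),
      MeasurePreserving F
        ((expMeasure (lam a)).prod (Measure.pi fun i : { i : α // ¬ i = a } => expMeasure (lam i)))
        (Measure.pi fun i : α => expMeasure (lam i)) ∧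
      (∀ t ω, F (t, ω) a = t) ∧
      (∀ t ω y (h : ¬ y = a), F (t, ω) y = ω ⟨y, h⟩) := by
  haveI : ∀ i : α, IsProbabilityMeasure (expMeasure (lam i)) :=
    fun i => isProbabilityMeasure_expMeasure (hlam i)
  haveI : ∀ i : α, SigmaFinite (expMeasure (lam i)) := fun i => inferInstance
  set p : α → Prop := fun i => i = a with hp
  have hpa : p a := rfl
  haveI hU : Unique (Subtype p) :=
    { default := Subtype.mk a hpa, uniq := fun x => Subtype.ext x.2 }
  set e := MeasurableEquiv.piEquivPiSubtypeProd (fun _ : α => ℝ) p with he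
  have hmpe := measurePreserving_piEquivPiSubtypeProd
    (fun i : α => expMeasure (lam i)) p
  set u := MeasurableEquiv.funUnique (Subtype p) ℝ with hu
  have hpi_eq : (fun i : Subtype p => expMeasure (lam i)) =
      fun _ : Subtype p => expMeasure (lam a) := by
    funext i; rw [i.2]
  have hmpu : MeasurePreserving u
      (@Measure.pi (Subtype p) (fun _ => ℝ) (Subtype.fintype p) (fun _ => inferInstance)
        fun i => expMeasure (lam i.1)) (expMeasure (lam a)) := by
    have h0 := measurePreserving_funUnique (expMeasure (lam a)) (Subtype p)
    convert h0 using 2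
  have hmpprod : MeasurePreserving (Prod.map u (id : ({ i : α // ¬ p i } → ℝ) → _))
      ((@Measure.pi (Subtype p) (fun _ => ℝ) (Subtype.fintype p) (fun _ => inferInstance)
          fun i => expMeasure (lam i.1)).prod
        (Measure.pi fun i : { i : α // ¬ p i } => expMeasure (lam i)))
      ((expMeasure (lam a)).prod
        (Measure.pi fun i : { i : α // ¬ p i } => expMeasure (lam i))) :=
    hmpu.prod (MeasurePreserving.id _)
  set E : (α → ℝ) ≃ᵐ (ℝ × ({ i : α // ¬ i = a } → ℝ)) :=
    e.trans (u.prodCongr (MeasurableEquiv.refl _)) with hE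
  have hcoe : ⇑(u.prodCongr (MeasurableEquiv.refl ({ i : α // ¬ p i } → ℝ))) =
      Prod.map u id := by
    funext z; rfl
  have hmpE : MeasurePreserving E
      (Measure.pi fun i : α => expMeasure (lam i))
      ((expMeasure (lam a)).prod
        (Measure.pi fun i : { i : α // ¬ i = a } => expMeasure (lam i))) := by
    have := (hcoe ▸ hmpprod).comp hmpe
    exact this
  refine ⟨E.symm, hmpE.symm E, ?_, ?_⟩
  · intro t ω
    show E.symm (t, ω) a = t
    have : E.symm (t, ω) = e.symm (u.symm t, ω) := rfl
    rw [this]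
    show (Equiv.piEquivPiSubtypeProd p (fun _ : α => ℝ)).symm (u.symm t, ω) a = t
    rw [Equiv.piEquivPiSubtypeProd_symm_apply]
    rw [dif_pos hpa]
    rfl
  · intro t ω y h
    show E.symm (t, ω) y = ω ⟨y, h⟩
    have : E.symm (t, ω) = e.symm (u.symm t, ω) := rfl
    rw [this]
    show (Equiv.piEquivPiSubtypeProd p (fun _ : α => ℝ)).symm (u.symm t, ω) y = ω ⟨y, h⟩
    rw [Equiv.piEquivPiSubtypeProd_symm_apply]
    exact dif_neg h

end Split

section Exp

lemma expMeasure_eq (r : ℝ) : expMeasure r = volume.withDensity (exponentialPDF r) := rfl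

lemma expMeasure_Ioi {r t : ℝ} (hr : 0 < r) (ht : 0 ≤ t) :
    expMeasure r (Ioi t) = ENNReal.ofReal (rexp (-(r * t))) := by
  haveI : IsProbabilityMeasure (expMeasure r) := isProbabilityMeasure_expMeasure hr
  have hIic : expMeasure r (Iic t) = ENNReal.ofReal (1 - rexp (-(r * t))) := by
    rw [expMeasure_eq, withDensity_apply _ measurableSet_Iic]
    rw [lintegral_exponentialPDF_eq_antiDeriv hr t, if_pos ht]
  rw [← compl_Iic, measure_compl measurableSet_Iic (measure_ne_top _ _), hIic,
    measure_univ]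
  have hexp1 : rexp (-(r * t)) ≤ 1 := by
    rw [Real.exp_le_one_iff]
    nlinarith
  have hexp0 : (0:ℝ) ≤ rexp (-(r * t)) := (Real.exp_pos _).le
  rw [show (1 : ℝ≥0∞) = ENNReal.ofReal 1 by simp, ← ENNReal.ofReal_sub _ (by linarith)]
  norm_num

lemma expMeasure_singleton (r t : ℝ) : expMeasure r {t} = 0 := by
  rw [expMeasure_eq, withDensity_apply _ (measurableSet_singleton t)]
  exact setLIntegral_measure_zero _ _ (Real.volume_singleton)

lemma expMeasure_Ici {r t : ℝ} (hr : 0 < r) (ht : 0 ≤ t) :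
    expMeasure r (Ici t) = ENNReal.ofReal (rexp (-(r * t))) := by
  have : (Ici t : Set ℝ) = {t} ∪ Ioi t := by
    ext s; simp [le_iff_lt_or_eq, or_comm, eq_comm]
  rw [this, measure_union (by simp [Set.disjoint_left]) measurableSet_Ioi,
    expMeasure_singleton, zero_add, expMeasure_Ioi hr ht]

end Exp

section PerA

variable [Fintype α]

lemma marginal (lam : α → ℝ) (hlam : ∀ x, 0 < lam x) (x : α) {s : Set ℝ}
    (hs : MeasurableSet s) :
    (Measure.pi fun i : α => expMeasure (lam i)) {w : α → ℝ | w x ∈ s}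
      = expMeasure (lam x) s := by
  haveI : ∀ i : α, IsProbabilityMeasure (expMeasure (lam i)) :=
    fun i => isProbabilityMeasure_expMeasure (hlam i)
  obtain ⟨F, hF, hFa, hFy⟩ := pi_split lam hlam x
  have hm : MeasurableSet {w : α → ℝ | w x ∈ s} := measurable_pi_apply x hs
  have hpre : F ⁻¹' {w : α → ℝ | w x ∈ s} = s ×ˢ Set.univ := by
    ext ⟨t, ω⟩
    simp [hFa t ω]
  rw [← hF.measure_preimage hm.nullMeasurableSet, hpre, Measure.prod_prod, measure_univ,
    mul_one]

lemma integral_survival (lam : α → ℝ) (hlam : ∀ x, 0 < lam x) (x : α) :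
    ∫⁻ t in Ici (0:ℝ), expMeasure (lam x) (Ici t) = ENNReal.ofReal (1 / lam x) := by
  have h1 : ∀ t ∈ Ici (0:ℝ), expMeasure (lam x) (Ici t)
      = ENNReal.ofReal (1 / lam x) * exponentialPDF (lam x) t := by
    intro t ht
    have hne := (hlam x).ne'
    rw [expMeasure_Ici (hlam x) ht, exponentialPDF_of_nonneg ht,
      ← ENNReal.ofReal_mul (by have := hlam x; positivity)]
    congr 1
    field_simp
  rw [setLIntegral_congr_fun measurableSet_Ici h1,
    lintegral_const_mul' _ _ ENNReal.ofReal_ne_top]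
  suffices h : ∫⁻ t in Ici (0:ℝ), exponentialPDF (lam x) t = 1 by rw [h, mul_one]
  have h2 : ∫⁻ t in Ici (0:ℝ), exponentialPDF (lam x) t = expMeasure (lam x) (Ici 0) := by
    rw [expMeasure_eq, withDensity_apply _ measurableSet_Ici]
  rw [h2, expMeasure_Ici (hlam x) le_rfl]
  simp

lemma key3 (M : Matroid α) (lam : α → ℝ) (hlam : ∀ x, 0 < lam x) (a : α) :
    ENNReal.ofReal (1 / lam a) * (Measure.pi fun i : α => expMeasure (lam i))
        {w : α → ℝ | a ∉ M.closure {y | y ≠ a ∧ w y < w a}}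
      = ∫⁻ t in Ici (0:ℝ), (Measure.pi fun i : α => expMeasure (lam i))
        {w : α → ℝ | t < w a ∧ a ∉ M.closure {y | y ≠ a ∧ w y < t}} := by
  haveI : ∀ i : α, IsProbabilityMeasure (expMeasure (lam i)) :=
    fun i => isProbabilityMeasure_expMeasure (hlam i)
  obtain ⟨F, hF, hFa, hFy⟩ := pi_split lam hlam a
  set κ := expMeasure (lam a) with hκ
  set ν := Measure.pi fun i : { i : α // ¬ i = a } => expMeasure (lam i) with hν
  set μ := Measure.pi fun i : α => expMeasure (lam i) with hμ
  -- the split event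
  set Ψ : Set (ℝ × ({ i : α // ¬ i = a } → ℝ)) :=
    {q | a ∉ M.closure {y | ∃ h : ¬ y = a, q.2 ⟨y, h⟩ < q.1}} with hΨ
  have hΨm : MeasurableSet Ψ := by
    refine measurableSet_setOf_set (fun y (q : ℝ × ({ i : α // ¬ i = a } → ℝ)) =>
      ∃ h : ¬ y = a, q.2 ⟨y, h⟩ < q.1) (fun y => ?_) (fun s => a ∉ M.closure s)
    by_cases hy : y = a
    · subst hy
      have : {q : ℝ × ({ i : α // ¬ i = y } → ℝ) | ∃ h : ¬ y = y, q.2 ⟨y, h⟩ < q.1} = ∅ := by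
        ext q; simp
      rw [this]; exact MeasurableSet.empty
    · have : {q : ℝ × ({ i : α // ¬ i = a } → ℝ) | ∃ h : ¬ y = a, q.2 ⟨y, h⟩ < q.1}
          = {q | q.2 ⟨y, hy⟩ < q.1} := by
        ext q
        constructor
        · rintro ⟨h, hlt⟩; exact hlt
        · intro hlt; exact ⟨hy, hlt⟩
      rw [this]
      exact measurableSet_lt (measurable_snd.eval) measurable_fst
  have hA'm : MeasurableSet {w : α → ℝ | a ∉ M.closure {y | y ≠ a ∧ w y < w a}} := by
    refine measurableSet_setOf_set (fun y (w : α → ℝ) => y ≠ a ∧ w y < w a)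
      (fun y => ?_) (fun s => a ∉ M.closure s)
    by_cases hy : y = a
    · subst hy
      have : {w : α → ℝ | y ≠ y ∧ w y < w y} = ∅ := by ext w; simp
      rw [this]; exact MeasurableSet.empty
    · have : {w : α → ℝ | y ≠ a ∧ w y < w a} = {w | w y < w a} := by
        ext w; simp [hy]
      rw [this]
      exact measurableSet_lt (measurable_pi_apply y) (measurable_pi_apply a)
  have hpre : F ⁻¹' {w : α → ℝ | a ∉ M.closure {y | y ≠ a ∧ w y < w a}} = Ψ := by
    ext ⟨t, ω⟩
    have hset : {y | y ≠ a ∧ F (t, ω) y < F (t, ω) a}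
        = {y | ∃ h : ¬ y = a, ω ⟨y, h⟩ < t} := by
      ext y
      constructor
      · rintro ⟨hy, hlt⟩
        rw [hFy t ω y hy, hFa t ω] at hlt
        exact ⟨hy, hlt⟩
      · rintro ⟨hy, hlt⟩
        refine ⟨hy, ?_⟩
        rw [hFy t ω y hy, hFa t ω]
        exact hlt
    simp only [mem_preimage, mem_setOf_eq, hΨ]
    rw [hset]
  -- slice measure
  set q : ℝ → ℝ≥0∞ :=
    fun t => ν {ω | a ∉ M.closure {y | ∃ h : ¬ y = a, ω ⟨y, h⟩ < t}} with hqdef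
  have hq : Measurable q := by
    have := measurable_measure_prodMk_left (ν := ν) hΨm
    exact this
  have hpdfm : Measurable (exponentialPDF (lam a)) :=
    (measurable_exponentialPDFReal (lam a)).ennreal_ofReal
  have step1 : μ {w : α → ℝ | a ∉ M.closure {y | y ≠ a ∧ w y < w a}} = κ.prod ν Ψ := by
    rw [← hpre]
    exact (hF.measure_preimage hA'm.nullMeasurableSet).symm
  have step2 : κ.prod ν Ψ = ∫⁻ t, q t ∂κ := Measure.prod_apply hΨm
  have step3 : ∫⁻ t, q t ∂κ = ∫⁻ t, exponentialPDF (lam a) t * q t := by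
    rw [hκ, expMeasure_eq]
    exact lintegral_withDensity_eq_lintegral_mul _ hpdfm hq
  have step4 : ENNReal.ofReal (1 / lam a) * ∫⁻ t, exponentialPDF (lam a) t * q t
      = ∫⁻ t, ENNReal.ofReal (1 / lam a) * (exponentialPDF (lam a) t * q t) :=
    (lintegral_const_mul' _ _ ENNReal.ofReal_ne_top).symm
  have step5 : ∀ t, ENNReal.ofReal (1 / lam a) * (exponentialPDF (lam a) t * q t)
      = (Ici (0:ℝ)).indicator (fun s => κ (Ioi s) * q s) t := by
    intro t
    by_cases ht : 0 ≤ t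
    · rw [Set.indicator_of_mem (mem_Ici.mpr ht), hκ, expMeasure_Ioi (hlam a) ht,
        exponentialPDF_of_nonneg ht, ← mul_assoc,
        ← ENNReal.ofReal_mul (by have := hlam a; positivity : (0:ℝ) ≤ 1 / lam a)]
      have hne := (hlam a).ne'
      congr 2
      field_simp
    · rw [Set.indicator_of_notMem (by simpa using ht), exponentialPDF_of_neg (lt_of_not_ge ht)]
      simp
  have step6 : ∫⁻ t, (Ici (0:ℝ)).indicator (fun s => κ (Ioi s) * q s) t
      = ∫⁻ t in Ici (0:ℝ), κ (Ioi t) * q t := by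
    rw [lintegral_indicator measurableSet_Ici]
  have step7 : ∀ t : ℝ, κ (Ioi t) * q t
      = μ {w : α → ℝ | t < w a ∧ a ∉ M.closure {y | y ≠ a ∧ w y < t}} := by
    intro t
    have hEm : MeasurableSet {w : α → ℝ | t < w a ∧ a ∉ M.closure {y | y ≠ a ∧ w y < t}} := by
      have h1 : MeasurableSet {w : α → ℝ | t < w a} :=
        measurableSet_lt measurable_const (measurable_pi_apply a)
      have h2 : MeasurableSet {w : α → ℝ | a ∉ M.closure {y | y ≠ a ∧ w y < t}} := by
        refine measurableSet_setOf_set (fun y (w : α → ℝ) => y ≠ a ∧ w y < t)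
          (fun y => ?_) (fun s => a ∉ M.closure s)
        by_cases hy : y = a
        · subst hy
          have : {w : α → ℝ | y ≠ y ∧ w y < t} = ∅ := by ext w; simp
          rw [this]; exact MeasurableSet.empty
        · have : {w : α → ℝ | y ≠ a ∧ w y < t} = {w | w y < t} := by
            ext w; simp [hy]
          rw [this]
          exact measurableSet_lt (measurable_pi_apply y) measurable_const
      exact h1.inter h2
    have hpreE : F ⁻¹' {w : α → ℝ | t < w a ∧ a ∉ M.closure {y | y ≠ a ∧ w y < t}}
        = Ioi t ×ˢ {ω : { i : α // ¬ i = a } → ℝ |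
            a ∉ M.closure {y | ∃ h : ¬ y = a, ω ⟨y, h⟩ < t}} := by
      ext ⟨s, ω⟩
      have hset : {y | y ≠ a ∧ F (s, ω) y < t} = {y | ∃ h : ¬ y = a, ω ⟨y, h⟩ < t} := by
        ext y
        constructor
        · rintro ⟨hy, hlt⟩
          rw [hFy s ω y hy] at hlt
          exact ⟨hy, hlt⟩
        · rintro ⟨hy, hlt⟩
          refine ⟨hy, ?_⟩
          rw [hFy s ω y hy]
          exact hlt
      simp only [mem_preimage, mem_setOf_eq, Set.mem_prod, mem_Ioi]
      rw [hset, hFa s ω]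
    rw [← hF.measure_preimage hEm.nullMeasurableSet, hpreE, Measure.prod_prod]
  calc ENNReal.ofReal (1 / lam a) * μ {w : α → ℝ | a ∉ M.closure {y | y ≠ a ∧ w y < w a}}
      = ENNReal.ofReal (1 / lam a) * ∫⁻ t, exponentialPDF (lam a) t * q t := by
        rw [step1, step2, step3]
    _ = ∫⁻ t, ENNReal.ofReal (1 / lam a) * (exponentialPDF (lam a) t * q t) := step4
    _ = ∫⁻ t, (Ici (0:ℝ)).indicator (fun s => κ (Ioi s) * q s) t := by
        exact lintegral_congr step5
    _ = ∫⁻ t in Ici (0:ℝ), κ (Ioi t) * q t := step6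
    _ = ∫⁻ t in Ici (0:ℝ), μ {w : α → ℝ | t < w a ∧ a ∉ M.closure {y | y ≠ a ∧ w y < t}} := by
        exact setLIntegral_congr_fun measurableSet_Ici
          (fun t _ => step7 t)

end PerA

end SamProof


namespace SamProof

variable {α : Type*}

lemma finsum_mem_eq_sum_indicator [Fintype α] (g : α → ℝ) (s : Set α) :
    ∑ᶠ a ∈ s, g a = ∑ a : α, s.indicator g a := by
  calc ∑ᶠ a ∈ s, g a = ∑ a ∈ (Set.toFinite s).toFinset, g a :=
        finsum_mem_eq_finite_toFinset_sum g (Set.toFinite s)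
    _ = ∑ a ∈ (Set.toFinite s).toFinset, s.indicator g a :=
        Finset.sum_congr rfl fun x hx =>
          (Set.indicator_of_mem ((Set.Finite.mem_toFinset _).mp hx) g).symm
    _ = ∑ a : α, s.indicator g a :=
        Finset.sum_subset (Finset.subset_univ _) fun x _ hx =>
          Set.indicator_of_notMem (by simpa using hx) g

lemma sum_indicator_ncard [Fintype α] (s : Set α) :
    ∑ a : α, s.indicator (fun _ => (1:ℝ≥0∞)) a = s.ncard := by
  calc ∑ a : α, s.indicator (fun _ => (1:ℝ≥0∞)) a
      = ∑ a ∈ (Set.toFinite s).toFinset, s.indicator (fun _ => (1:ℝ≥0∞)) a :=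
        (Finset.sum_subset (Finset.subset_univ _) fun x _ hx =>
          Set.indicator_of_notMem (by simpa using hx) _).symm
    _ = ∑ _a ∈ (Set.toFinite s).toFinset, (1:ℝ≥0∞) :=
        Finset.sum_congr rfl fun x hx =>
          Set.indicator_of_mem ((Set.Finite.mem_toFinset _).mp hx) _
    _ = ((Set.toFinite s).toFinset.card : ℝ≥0∞) := by simp
    _ = (s.ncard : ℝ≥0∞) := by rw [Set.ncard_eq_toFinset_card s (Set.toFinite s)]

end SamProof

open Matroid MeasureTheory ProbabilityTheory in
/-- For a loopless matroid on a finite ground set with independent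
exponential element weights of rates `λ_x > 0`, the greedy algorithm that outputs a
minimum-weight base for one independent exponential sample per element (any measurable
tie-breaking) has expected true cost at most `c*(M) · OPT`, where `OPT` is the minimum
expected weight of a base (the expected true cost of the output base is
`E[Σ_{x ∈ B^SAM} 1/λ_x]`). -/
theorem sample_minBase_expected_cost_le {α : Type*} [Fintype α] (M : Matroid α)
    (hE : M.E = Set.univ) (hM : M.IsLoopless)
    (lam : α → ℝ) (hlam : ∀ x, 0 < lam x)
    (BSAM : (α → ℝ) → Set α)
    (hmeas : ∀ b : Set α, MeasurableSet {x : α → ℝ | BSAM x = b})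
    (hopt : ∀ x : α → ℝ, M.IsMinBase x (BSAM x)) :
    ∫ x, (∑ᶠ a ∈ BSAM x, 1 / lam a) ∂(Measure.pi fun a : α => expMeasure (lam a))
      ≤ (M.maxCocircuitSize : ℝ) *
        sInf {c : ℝ | ∃ B, M.IsBase B ∧ c = ∑ᶠ a ∈ B, 1 / lam a} := by
  classical
  open SamProof Set in
  haveI : ∀ i : α, IsProbabilityMeasure (expMeasure (lam i)) :=
    fun i => isProbabilityMeasure_expMeasure (hlam i)
  set μ := Measure.pi fun a : α => expMeasure (lam a) with hμdef
  set costs := {c : ℝ | ∃ B, M.IsBase B ∧ c = ∑ᶠ a ∈ B, 1 / lam a} with hcostsdef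
  have hcosts_fin : costs.Finite := by
    have hsub : costs ⊆ (fun B => ∑ᶠ a ∈ B, 1 / lam a) '' {B | M.IsBase B} := by
      rintro c ⟨B, hB, rfl⟩; exact ⟨B, hB, rfl⟩
    exact ((Set.toFinite _).image _).subset hsub
  have hcosts_ne : costs.Nonempty := by
    obtain ⟨B, hB⟩ := M.exists_isBase; exact ⟨_, B, hB, rfl⟩
  obtain ⟨Bstar, hBstar, hBval⟩ := hcosts_ne.csInf_mem hcosts_fin
  have hcost_nonneg : ∀ c ∈ costs, 0 ≤ c := by
    rintro c ⟨B, hB, rfl⟩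
    rw [SamProof.finsum_mem_eq_sum_indicator]
    exact Finset.sum_nonneg fun x _ =>
      Set.indicator_nonneg (fun y _ => by have := hlam y; positivity) x
  have hsInf_nonneg : 0 ≤ sInf costs := le_csInf hcosts_ne hcost_nonneg
  -- events
  set A : α → Set (α → ℝ) := fun a => {w | a ∈ BSAM w} with hA
  have hAm : ∀ a, MeasurableSet (A a) := by
    intro a
    have hrw : A a = ⋃ (b : Set α) (_ : a ∈ b), {w | BSAM w = b} := by
      ext w
      simp only [mem_iUnion, mem_setOf_eq, hA]
      exact ⟨fun h => ⟨BSAM w, h, rfl⟩, fun ⟨b, hb, he⟩ => he ▸ hb⟩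
    rw [hrw]
    haveI : Countable (Set α) := Finite.to_countable
    exact MeasurableSet.iUnion fun b => MeasurableSet.iUnion fun _ => hmeas b
  set A' : α → Set (α → ℝ) :=
    fun a => {w | a ∉ M.closure {y | y ≠ a ∧ w y < w a}} with hA'
  have hAsub : ∀ a, A a ⊆ A' a := fun a w hw =>
    SamProof.minbase_notin_closure hE (hopt w) hw
  -- the integrand
  have hf_eq : ∀ w : α → ℝ, (∑ᶠ a ∈ BSAM w, 1 / lam a)
      = ∑ a : α, (A a).indicator (fun _ => 1 / lam a) w := by
    intro w
    rw [SamProof.finsum_mem_eq_sum_indicator]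
    refine Finset.sum_congr rfl fun a _ => ?_
    by_cases h : a ∈ BSAM w
    · rw [Set.indicator_of_mem h, Set.indicator_of_mem (show w ∈ A a from h)]
    · rw [Set.indicator_of_notMem h, Set.indicator_of_notMem (show w ∉ A a from h)]
  have hfm : Measurable fun w : α → ℝ => ∑ᶠ a ∈ BSAM w, 1 / lam a := by
    have : (fun w : α → ℝ => ∑ᶠ a ∈ BSAM w, 1 / lam a)
        = fun w => ∑ a : α, (A a).indicator (fun _ => 1 / lam a) w := funext hf_eq
    rw [this]
    exact Finset.measurable_sum _ fun a _ => measurable_const.indicator (hAm a)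
  have hfnn : ∀ w : α → ℝ, 0 ≤ ∑ᶠ a ∈ BSAM w, 1 / lam a := by
    intro w
    rw [hf_eq]
    exact Finset.sum_nonneg fun a _ =>
      Set.indicator_nonneg (fun y _ => by have := hlam a; positivity) _
  rw [integral_eq_lintegral_of_nonneg_ae (Filter.Eventually.of_forall hfnn)
    hfm.aestronglyMeasurable]
  -- the first identity
  have hL1 : ∫⁻ w, ENNReal.ofReal (∑ᶠ a ∈ BSAM w, 1 / lam a) ∂μ
      = ∑ a : α, ENNReal.ofReal (1 / lam a) * μ (A a) := by
    have hofreal : ∀ w : α → ℝ, ENNReal.ofReal (∑ᶠ a ∈ BSAM w, 1 / lam a)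
        = ∑ a : α, (A a).indicator (fun _ => ENNReal.ofReal (1 / lam a)) w := by
      intro w
      rw [hf_eq w, ENNReal.ofReal_sum_of_nonneg (fun a _ =>
        Set.indicator_nonneg (fun y _ => by have := hlam a; positivity) _)]
      refine Finset.sum_congr rfl fun a _ => ?_
      by_cases h : w ∈ A a
      · rw [Set.indicator_of_mem h, Set.indicator_of_mem h]
      · rw [Set.indicator_of_notMem h, Set.indicator_of_notMem h, ENNReal.ofReal_zero]
    rw [lintegral_congr hofreal,
      lintegral_finset_sum _ (fun a _ => measurable_const.indicator (hAm a))]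
    exact Finset.sum_congr rfl fun a _ => lintegral_indicator_const (hAm a) _
  -- auxiliary sets
  set Gcl : α → ℝ → Set (α → ℝ) :=
    fun a t => {w | a ∉ M.closure {y | w y < t}} with hGcl
  have hGclm : ∀ a t, MeasurableSet (Gcl a t) := by
    intro a t
    refine SamProof.measurableSet_setOf_set (fun y (w : α → ℝ) => w y < t)
      (fun y => ?_) (fun s => a ∉ M.closure s)
    exact measurableSet_lt (measurable_pi_apply y) measurable_const
  have hGclmt : ∀ a, Measurable fun t => μ (Gcl a t) := by
    intro a
    have hprod : MeasurableSet {q : ℝ × (α → ℝ) | a ∉ M.closure {y | q.2 y < q.1}} := by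
      refine SamProof.measurableSet_setOf_set (fun y (q : ℝ × (α → ℝ)) => q.2 y < q.1)
        (fun y => ?_) (fun s => a ∉ M.closure s)
      exact measurableSet_lt (measurable_snd.eval) measurable_fst
    exact measurable_measure_prodMk_left hprod
  set D : α → ℝ → Set (α → ℝ) := fun x t => {w | x ∈ Bstar ∧ t ≤ w x} with hD
  have hDm : ∀ x t, MeasurableSet (D x t) := by
    intro x t
    by_cases hx : x ∈ Bstar
    · have : D x t = {w | t ≤ w x} := by ext w; simp [hD, hx]
      rw [this]
      exact measurableSet_le measurable_const (measurable_pi_apply x)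
    · have : D x t = ∅ := by ext w; simp [hD, hx]
      rw [this]; exact MeasurableSet.empty
  have hDmt : ∀ x, Measurable fun t => μ (D x t) := by
    intro x
    by_cases hx : x ∈ Bstar
    · have heq : (fun t => μ (D x t)) = fun t => μ {w : α → ℝ | t ≤ w x} := by
        funext t; congr 1; ext w; simp [hD, hx]
      rw [heq]
      have hprod : MeasurableSet {q : ℝ × (α → ℝ) | q.1 ≤ q.2 x} :=
        measurableSet_le measurable_fst (measurable_snd.eval)
      exact measurable_measure_prodMk_left hprod
    · have heq : (fun t => μ (D x t)) = fun _ => 0 := by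
        funext t
        have : D x t = ∅ := by ext w; simp [hD, hx]
        rw [this, measure_empty]
      rw [heq]; exact measurable_const
  -- chain
  have hstep_a : ∀ a : α, ENNReal.ofReal (1 / lam a) * μ (A a)
      ≤ ∫⁻ t in Ici (0:ℝ), μ (Gcl a t) := by
    intro a
    have h1 : ENNReal.ofReal (1 / lam a) * μ (A a)
        ≤ ENNReal.ofReal (1 / lam a) * μ (A' a) :=
      mul_le_mul_right (measure_mono (hAsub a)) _
    have h2 := SamProof.key3 M lam hlam a
    have h3 : ∫⁻ t in Ici (0:ℝ),
        μ {w : α → ℝ | t < w a ∧ a ∉ M.closure {y | y ≠ a ∧ w y < t}}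
        ≤ ∫⁻ t in Ici (0:ℝ), μ (Gcl a t) := by
      refine lintegral_mono fun t => measure_mono fun w hw => ?_
      have hseteq : {y | w y < t} = {y | y ≠ a ∧ w y < t} := by
        ext y
        constructor
        · intro hlt
          refine ⟨fun he => ?_, hlt⟩
          exact absurd (he ▸ hlt) (not_lt.mpr (le_of_lt hw.1))
        · exact fun h => h.2
      show a ∉ M.closure {y | w y < t}
      rw [hseteq]
      exact hw.2
    calc ENNReal.ofReal (1 / lam a) * μ (A a)
        ≤ ENNReal.ofReal (1 / lam a) * μ (A' a) := h1
      _ = ∫⁻ t in Ici (0:ℝ),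
            μ {w : α → ℝ | t < w a ∧ a ∉ M.closure {y | y ≠ a ∧ w y < t}} := h2
      _ ≤ ∫⁻ t in Ici (0:ℝ), μ (Gcl a t) := h3
  -- pointwise counting
  have hcount : ∀ t : ℝ, (∑ a : α, μ (Gcl a t))
      ≤ (M.maxCocircuitSize : ℝ≥0∞) * ∑ x : α, μ (D x t) := by
    intro t
    have hlhs : ∑ a : α, μ (Gcl a t)
        = ∫⁻ w, ∑ a : α, (Gcl a t).indicator (fun _ => (1:ℝ≥0∞)) w ∂μ := by
      rw [lintegral_finset_sum _ (fun a _ => measurable_const.indicator (hGclm a t))]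
      exact Finset.sum_congr rfl fun a _ => by
        rw [lintegral_indicator_const (hGclm a t), one_mul]
    have hrhs : ∑ x : α, μ (D x t)
        = ∫⁻ w, ∑ x : α, (D x t).indicator (fun _ => (1:ℝ≥0∞)) w ∂μ := by
      rw [lintegral_finset_sum _ (fun x _ => measurable_const.indicator (hDm x t))]
      exact Finset.sum_congr rfl fun x _ => by
        rw [lintegral_indicator_const (hDm x t), one_mul]
    have hpt : ∀ w : α → ℝ, (∑ a : α, (Gcl a t).indicator (fun _ => (1:ℝ≥0∞)) w)
        ≤ (M.maxCocircuitSize : ℝ≥0∞) *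
          ∑ x : α, (D x t).indicator (fun _ => (1:ℝ≥0∞)) w := by
      intro w
      have hset1 : ∀ a : α, (Gcl a t).indicator (fun _ => (1:ℝ≥0∞)) w
          = (Set.univ \ M.closure {y | w y < t}).indicator (fun _ => (1:ℝ≥0∞)) a := by
        intro a
        by_cases h : a ∈ M.closure {y | w y < t}
        · rw [Set.indicator_of_notMem (show w ∉ Gcl a t from fun hc => hc h),
            Set.indicator_of_notMem
              (show a ∉ Set.univ \ M.closure {y | w y < t} from fun hc => hc.2 h)]
        · rw [Set.indicator_of_mem (show w ∈ Gcl a t from h),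
            Set.indicator_of_mem
              (show a ∈ Set.univ \ M.closure {y | w y < t} from ⟨mem_univ a, h⟩)]
      have hset2 : ∀ x : α, (D x t).indicator (fun _ => (1:ℝ≥0∞)) w
          = (Bstar \ {y | w y < t}).indicator (fun _ => (1:ℝ≥0∞)) x := by
        intro x
        by_cases h : x ∈ Bstar ∧ t ≤ w x
        · rw [Set.indicator_of_mem (show w ∈ D x t from h),
            Set.indicator_of_mem
              (show x ∈ Bstar \ {y | w y < t} from ⟨h.1, not_lt.mpr h.2⟩)]
        · rw [Set.indicator_of_notMem (show w ∉ D x t from h),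
            Set.indicator_of_notMem
              (show x ∉ Bstar \ {y | w y < t} from fun hc => h ⟨hc.1, not_lt.mp hc.2⟩)]
      calc ∑ a : α, (Gcl a t).indicator (fun _ => (1:ℝ≥0∞)) w
          = ((Set.univ \ M.closure {y | w y < t}).ncard : ℝ≥0∞) := by
            rw [Finset.sum_congr rfl fun a _ => hset1 a, SamProof.sum_indicator_ncard]
        _ ≤ ((M.maxCocircuitSize * (Bstar \ {y | w y < t}).ncard : ℕ) : ℝ≥0∞) := by
            exact_mod_cast Nat.cast_le.mpr (SamProof.core hE hBstar {y | w y < t})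
        _ = (M.maxCocircuitSize : ℝ≥0∞) *
              ∑ x : α, (D x t).indicator (fun _ => (1:ℝ≥0∞)) w := by
            rw [Nat.cast_mul]
            congr 1
            rw [Finset.sum_congr rfl fun x _ => hset2 x, SamProof.sum_indicator_ncard]
    calc ∑ a : α, μ (Gcl a t)
        = ∫⁻ w, ∑ a : α, (Gcl a t).indicator (fun _ => (1:ℝ≥0∞)) w ∂μ := hlhs
      _ ≤ ∫⁻ w, (M.maxCocircuitSize : ℝ≥0∞) *
            ∑ x : α, (D x t).indicator (fun _ => (1:ℝ≥0∞)) w ∂μ := lintegral_mono hpt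
      _ = (M.maxCocircuitSize : ℝ≥0∞) *
            ∫⁻ w, ∑ x : α, (D x t).indicator (fun _ => (1:ℝ≥0∞)) w ∂μ :=
          lintegral_const_mul' _ _ (ENNReal.natCast_ne_top _)
      _ = (M.maxCocircuitSize : ℝ≥0∞) * ∑ x : α, μ (D x t) := by rw [← hrhs]
  -- time integrals
  have hDint : ∀ x : α, ∫⁻ t in Ici (0:ℝ), μ (D x t)
      = Bstar.indicator (fun x' => ENNReal.ofReal (1 / lam x')) x := by
    intro x
    by_cases hx : x ∈ Bstar
    · have heq : ∀ t : ℝ, μ (D x t) = expMeasure (lam x) (Ici t) := by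
        intro t
        have h1 : D x t = {w : α → ℝ | w x ∈ Ici t} := by ext w; simp [hD, hx]
        rw [h1, SamProof.marginal lam hlam x measurableSet_Ici]
      rw [Set.indicator_of_mem hx]
      calc ∫⁻ t in Ici (0:ℝ), μ (D x t)
          = ∫⁻ t in Ici (0:ℝ), expMeasure (lam x) (Ici t) :=
            setLIntegral_congr_fun measurableSet_Ici
              (fun t _ => heq t)
        _ = ENNReal.ofReal (1 / lam x) := SamProof.integral_survival lam hlam x
    · rw [Set.indicator_of_notMem hx]
      have heq : ∀ t : ℝ, μ (D x t) = 0 := by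
        intro t
        have : D x t = ∅ := by ext w; simp [hD, hx]
        rw [this, measure_empty]
      rw [setLIntegral_congr_fun measurableSet_Ici
        (fun t _ => heq t)]
      simp
  -- put the chain together
  have hmain : ∫⁻ w, ENNReal.ofReal (∑ᶠ a ∈ BSAM w, 1 / lam a) ∂μ
      ≤ ENNReal.ofReal ((M.maxCocircuitSize : ℝ) * sInf costs) := by
    calc ∫⁻ w, ENNReal.ofReal (∑ᶠ a ∈ BSAM w, 1 / lam a) ∂μ
        = ∑ a : α, ENNReal.ofReal (1 / lam a) * μ (A a) := hL1
      _ ≤ ∑ a : α, ∫⁻ t in Ici (0:ℝ), μ (Gcl a t) :=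
          Finset.sum_le_sum fun a _ => hstep_a a
      _ = ∫⁻ t in Ici (0:ℝ), ∑ a : α, μ (Gcl a t) :=
          (lintegral_finset_sum _ (fun a _ => hGclmt a)).symm
      _ ≤ ∫⁻ t in Ici (0:ℝ), (M.maxCocircuitSize : ℝ≥0∞) * ∑ x : α, μ (D x t) :=
          lintegral_mono fun t => hcount t
      _ = (M.maxCocircuitSize : ℝ≥0∞) * ∫⁻ t in Ici (0:ℝ), ∑ x : α, μ (D x t) :=
          lintegral_const_mul' _ _ (ENNReal.natCast_ne_top _)
      _ = (M.maxCocircuitSize : ℝ≥0∞) * ∑ x : α, ∫⁻ t in Ici (0:ℝ), μ (D x t) := by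
          rw [lintegral_finset_sum _ (fun x _ => hDmt x)]
      _ = (M.maxCocircuitSize : ℝ≥0∞) *
            ∑ x : α, Bstar.indicator (fun x' => ENNReal.ofReal (1 / lam x')) x := by
          rw [Finset.sum_congr rfl fun x _ => hDint x]
      _ = ENNReal.ofReal ((M.maxCocircuitSize : ℝ) * sInf costs) := by
          rw [hBval, ENNReal.ofReal_mul (by positivity : (0:ℝ) ≤ (M.maxCocircuitSize : ℝ))]
          congr 1
          · rw [ENNReal.ofReal_natCast]
          · rw [SamProof.finsum_mem_eq_sum_indicator,
              ENNReal.ofReal_sum_of_nonneg (fun x _ =>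
                Set.indicator_nonneg (fun y _ => by have := hlam y; positivity) _)]
            refine (Finset.sum_congr rfl fun x _ => ?_).symm
            by_cases h : x ∈ Bstar
            · rw [Set.indicator_of_mem h, Set.indicator_of_mem h]
            · rw [Set.indicator_of_notMem h, Set.indicator_of_notMem h,
                ENNReal.ofReal_zero]
  exact ENNReal.toReal_le_of_le_ofReal
    (mul_nonneg (Nat.cast_nonneg _) hsInf_nonneg) hmain
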